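/- The one- and two-index Casimir operators have the explicit expressions C_i = ¼(μ_i² − μ_i r_i − ¾) and C_{ij} = ¼(−L_{ij}² + (μ_i r_i + μ_j r_j)² − 1) as operators on ℝ[x_1,…,x_n], where L_{ij} = x_i T_j − x_j T_i is the Dunkl angular momentum operator and i ≠ j. -/

import Mathlib

open MvPolynomial Finset

noncomputable section

variable {n : ℕ}

/-- Reflection operator `r_i`. -/
def reflOp (i : Fin n) : Module.End ℝ (MvPolynomial (Fin n) ℝ) :=
  (MvPolynomial.aeval (fun j : Fin n => if j = i then -X i else X j)).toLinearMap

/-- Division by the variable `x_i` (as a linear operator, discarding non-divisible terms). -/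
def divXop (i : Fin n) : Module.End ℝ (MvPolynomial (Fin n) ℝ) where
  toFun p := p.divMonomial (Finsupp.single i 1)
  map_add' p q := by ext m; simp [coeff_divMonomial]
  map_smul' c p := by ext m; simp [coeff_divMonomial]

/-- The `i`-th `Z_2^n` Dunkl operator `T_i = ∂_i + μ_i x_i⁻¹ (1 - r_i)`. -/
def dunklT (μ : Fin n → ℝ) (i : Fin n) : Module.End ℝ (MvPolynomial (Fin n) ℝ) :=
  (pderiv i).toLinearMap + μ i • (divXop i * (1 - reflOp i))

/-- The intermediate Laplace–Dunkl operator `Δ_A = Σ_{i∈A} T_i²`. -/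
def lapD (μ : Fin n → ℝ) (A : Finset (Fin n)) : Module.End ℝ (MvPolynomial (Fin n) ℝ) :=
  ∑ i ∈ A, dunklT μ i ^ 2

/-- Multiplication by `‖x_A‖² = Σ_{i∈A} x_i²`. -/
def mulX2 (A : Finset (Fin n)) : Module.End ℝ (MvPolynomial (Fin n) ℝ) :=
  LinearMap.mulLeft ℝ (∑ i ∈ A, X i ^ 2)

/-- The Euler operator `E_A = Σ_{i∈A} x_i ∂_i`. -/
def eulerOp (A : Finset (Fin n)) : Module.End ℝ (MvPolynomial (Fin n) ℝ) :=
  ∑ i ∈ A, LinearMap.mulLeft ℝ (X i) * (pderiv i).toLinearMap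

/-- `γ_A = |A|/2 + Σ_{i∈A} μ_i`. -/
def gamA (μ : Fin n → ℝ) (A : Finset (Fin n)) : ℝ :=
  (A.card : ℝ) / 2 + ∑ i ∈ A, μ i

/-- The Casimir operator `C_A`. -/
def casOp (μ : Fin n → ℝ) (A : Finset (Fin n)) : Module.End ℝ (MvPolynomial (Fin n) ℝ) :=
  (1 / 4 : ℝ) • ((eulerOp A + gamA μ A • 1) ^ 2 - (2 : ℝ) • (eulerOp A + gamA μ A • 1)
    - mulX2 A * lapD μ A)

end

/-!
On a monomial `x^m`, `r_i` acts by the sign `(-1)^(m_i)` and `T_i` lowers `m_i` by one with the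
factor `m_i + μ_i (1 - (-1)^(m_i))`. Checking on monomials gives `r_i² = 1`, `r_i x_i = -x_i r_i`,
`r_i T_i = -T_i r_i` and `T_i x_i = x_i T_i + 1 + 2 μ_i r_i` (for each `i` a copy of the rational
Cherednik algebra of `ℤ/2`), the commutation of operators with distinct indices, and
`x_i T_i = x_i ∂_i + μ_i (1 - r_i)`. The last relation turns `E_A + γ_A` into
`∑_{i ∈ A} (x_i T_i + 1/2 + μ_i r_i)`, after which both formulas are identities in any algebra
satisfying these relations, proved by normal ordering.
-/

section Casimir

variable {A : Type*} [Ring A]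

lemma mul_mul_eq_neg_of_mul_eq_neg {a b : A} (h : a * b = -(b * a)) (c : A) :
    a * (b * c) = -(b * (a * c)) := by
  rw [← mul_assoc, h, neg_mul, mul_assoc]

variable [Algebra ℝ A]

structure IsDunklTriple (x t r : A) (μ : ℝ) : Prop where
  refl_mul_self : r * r = 1
  refl_mul_var : r * x = -(x * r)
  refl_mul_dunkl : r * t = -(t * r)
  dunkl_mul_var : t * x = x * t + 1 + (2 * μ) • r

namespace IsDunklTriple

variable {x t r y u s : A} {μ ν : ℝ}

lemma dunkl_mul_var_mul (h : IsDunklTriple x t r μ) (z : A) :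
    t * (x * z) = x * (t * z) + z + (2 * μ) • (r * z) := by
  rw [← mul_assoc, h.dunkl_mul_var, add_mul, add_mul, one_mul, smul_mul_assoc, mul_assoc]

theorem casimir_eq (h : IsDunklTriple x t r μ) :
    (x * t + (1 / 2 : ℝ) • 1 + μ • r) ^ 2 - (2 : ℝ) • (x * t + (1 / 2 : ℝ) • 1 + μ • r)
      - x ^ 2 * t ^ 2 = (μ ^ 2 - 3 / 4 : ℝ) • 1 - μ • r := by
  simp only [pow_two, mul_add, add_mul, smul_mul_assoc, mul_smul_comm, mul_one, one_mul, mul_assoc,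
    h.refl_mul_self, mul_mul_eq_neg_of_mul_eq_neg h.refl_mul_var, h.refl_mul_dunkl,
    h.dunkl_mul_var_mul, mul_neg, smul_neg, neg_neg]
  module

theorem casimir_add_eq (h : IsDunklTriple x t r μ) (h' : IsDunklTriple y u s ν)
    (hyx : Commute y x) (hty : Commute t y) (hux : Commute u x) (hut : Commute u t)
    (hry : Commute r y) (hru : Commute r u) (hsx : Commute s x) (hst : Commute s t)
    (hsr : Commute s r) :
    ((x * t + (1 / 2 : ℝ) • 1 + μ • r) + (y * u + (1 / 2 : ℝ) • 1 + ν • s)) ^ 2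
        - (2 : ℝ) • ((x * t + (1 / 2 : ℝ) • 1 + μ • r) + (y * u + (1 / 2 : ℝ) • 1 + ν • s))
        - (x ^ 2 + y ^ 2) * (t ^ 2 + u ^ 2)
      = -((x * u - y * t) ^ 2) + (μ • r + ν • s) ^ 2 - 1 := by
  -- normal ordering for `x < y < t < u < r < s`, the order in which the hypotheses are oriented
  simp only [pow_two, mul_add, add_mul, mul_sub, sub_mul, smul_mul_assoc, mul_smul_comm, mul_one,
    one_mul, mul_assoc,
    h.refl_mul_self, mul_mul_eq_neg_of_mul_eq_neg h.refl_mul_var, h.refl_mul_dunkl,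
    h.dunkl_mul_var_mul, h'.refl_mul_self, mul_mul_eq_neg_of_mul_eq_neg h'.refl_mul_var,
    h'.refl_mul_dunkl, h'.dunkl_mul_var_mul,
    hyx.left_comm, hty.left_comm, hux.left_comm, hut.eq, hry.left_comm, hru.eq, hsx.left_comm,
    hst.eq, hsr.eq, mul_neg, smul_neg, neg_neg]
  module

end IsDunklTriple

end Casimir

theorem MvPolynomial.linearMap_ext_monomial {σ R M : Type*} [CommSemiring R] [AddCommMonoid M]
    [Module R M] {f g : MvPolynomial σ R →ₗ[R] M}
    (h : ∀ m : σ →₀ ℕ, f (monomial m 1) = g (monomial m 1)) : f = g :=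
  linearMap_ext fun m => LinearMap.ext_ring (h m)

theorem Finsupp.single_add_tsub_single_of_ne {ι : Type*} {i j : ι} (h : i ≠ j) (m : ι →₀ ℕ) :
    single j 1 + m - single i 1 = single j 1 + (m - single i 1) := by
  ext k
  rcases eq_or_ne i k with rfl | hik
  · simp [single_eq_of_ne h]
  · simp [single_eq_of_ne hik.symm]

section Monomials

variable {n : ℕ}

lemma reflOp_monomial (i : Fin n) (m : Fin n →₀ ℕ) (c : ℝ) :
    reflOp i (monomial m c) = ((-1 : ℝ) ^ m i) • monomial m c := by
  have hvar : (fun j : Fin n => if j = i then -X i else X j)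
      = fun j => (if j = i then -1 else 1 : ℝ) • (X j : MvPolynomial (Fin n) ℝ) := by
    ext1 j; split_ifs with h <;> simp [h]
  rw [reflOp, AlgHom.toLinearMap_apply, hvar, aeval_monomial]
  simp only [smul_pow, Finsupp.prod, Finset.prod_smul, ite_pow, one_pow]
  rw [Finset.prod_ite_eq', mul_smul_comm, monomial_eq, Finsupp.prod, algebraMap_eq]
  congr 1
  split_ifs with h
  · rfl
  · rw [Finsupp.notMem_support_iff.mp h, pow_zero]

lemma divXop_monomial (i : Fin n) (m : Fin n →₀ ℕ) (c : ℝ) :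
    divXop i (monomial m c) = if m i = 0 then 0 else monomial (m - Finsupp.single i 1) c := by
  show (monomial m c).divMonomial (Finsupp.single i 1) = _
  split_ifs with h
  · ext d
    rw [coeff_divMonomial, coeff_monomial, if_neg, coeff_zero]
    intro he
    have := congrArg (· i) he
    simp only [Finsupp.add_apply, Finsupp.single_eq_same, h] at this
    omega
  · have hX : monomial m c = X i * monomial (m - Finsupp.single i 1) c := by
      rw [X, monomial_mul, one_mul, add_comm, Finsupp.sub_add_single_one_cancel h]
    rw [hX, X_mul_divMonomial]

def dunklCoeff (μ : ℝ) (k : ℕ) : ℝ := k + μ * (1 - (-1) ^ k)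

@[simp] lemma dunklCoeff_zero (μ : ℝ) : dunklCoeff μ 0 = 0 := by simp [dunklCoeff]

lemma dunklCoeff_succ (μ : ℝ) (k : ℕ) :
    dunklCoeff μ (k + 1) = dunklCoeff μ k + 1 + 2 * μ * (-1) ^ k := by
  simp only [dunklCoeff, Nat.cast_succ, pow_succ]; ring

lemma dunklT_monomial (μ : Fin n → ℝ) (i : Fin n) (m : Fin n →₀ ℕ) (c : ℝ) :
    dunklT μ i (monomial m c) = dunklCoeff (μ i) (m i) • monomial (m - Finsupp.single i 1) c := by
  by_cases h : m i = 0
  · have hT : dunklT μ i (monomial m c) = 0 := by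
      simp [dunklT, pderiv_monomial, reflOp_monomial, h]
    simp [hT, h]
  · simp only [dunklT, LinearMap.add_apply, LinearMap.smul_apply, Module.End.mul_apply,
      LinearMap.sub_apply, Module.End.one_apply, Derivation.coeFn_coe, pderiv_monomial,
      reflOp_monomial]
    have hdiff : monomial m c - (-1 : ℝ) ^ m i • monomial m c =
        (1 - (-1 : ℝ) ^ m i) • monomial m c := by
      rw [sub_smul, one_smul]
    have hderiv : monomial (m - Finsupp.single i 1) (c * m i) =
        (m i : ℝ) • monomial (m - Finsupp.single i 1) c := by
      rw [smul_monomial, smul_eq_mul, mul_comm]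
    rw [hdiff, map_smul, divXop_monomial, if_neg h, hderiv, dunklCoeff]
    module

lemma X_mul_dunklT_monomial (μ : Fin n → ℝ) (i : Fin n) (m : Fin n →₀ ℕ) (c : ℝ) :
    X i * dunklT μ i (monomial m c) = dunklCoeff (μ i) (m i) • monomial m c := by
  by_cases h : m i = 0
  · simp [dunklT_monomial, h]
  · rw [dunklT_monomial, mul_smul_comm, X, monomial_mul, one_mul, add_comm,
      Finsupp.sub_add_single_one_cancel h]

lemma dunklT_X_mul_monomial (μ : Fin n → ℝ) (i : Fin n) (m : Fin n →₀ ℕ) (c : ℝ) :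
    dunklT μ i (X i * monomial m c) = dunklCoeff (μ i) (m i + 1) • monomial m c := by
  rw [X, monomial_mul, one_mul, dunklT_monomial, add_tsub_cancel_left]
  simp [add_comm]

end Monomials

section Relations

variable {n : ℕ}

lemma reflOp_mul_self (i : Fin n) : reflOp (n := n) i * reflOp i = 1 := by
  refine MvPolynomial.linearMap_ext_monomial fun m => ?_
  simp [reflOp_monomial, smul_smul, ← mul_pow]

lemma reflOp_mul_mulLeft_X_self (i : Fin n) :
    reflOp i * LinearMap.mulLeft ℝ (X i) = -(LinearMap.mulLeft ℝ (X i) * reflOp (n := n) i) := by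
  refine MvPolynomial.linearMap_ext_monomial fun m => ?_
  simp only [Module.End.mul_apply, LinearMap.neg_apply, LinearMap.mulLeft_apply, reflOp_monomial,
    mul_smul_comm]
  rw [X, monomial_mul, reflOp_monomial]
  simp [add_comm 1, pow_succ]

lemma reflOp_mul_dunklT_self (μ : Fin n → ℝ) (i : Fin n) :
    reflOp i * dunklT μ i = -(dunklT μ i * reflOp i) := by
  refine MvPolynomial.linearMap_ext_monomial fun m => ?_
  simp only [Module.End.mul_apply, LinearMap.neg_apply, dunklT_monomial, reflOp_monomial,
    map_smul, smul_smul, ← neg_smul]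
  by_cases h : m i = 0
  · simp [h]
  · obtain ⟨k, hk⟩ := Nat.exists_eq_add_one_of_ne_zero h
    simp only [Finsupp.tsub_apply, Finsupp.single_eq_same, hk, Nat.add_sub_cancel, pow_succ]
    ring_nf

lemma dunklT_mul_mulLeft_X_self (μ : Fin n → ℝ) (i : Fin n) :
    dunklT μ i * LinearMap.mulLeft ℝ (X i) =
      LinearMap.mulLeft ℝ (X i) * dunklT μ i + 1 + (2 * μ i) • reflOp i := by
  refine MvPolynomial.linearMap_ext_monomial fun m => ?_
  simp only [Module.End.mul_apply, LinearMap.add_apply, LinearMap.smul_apply, Module.End.one_apply,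
    LinearMap.mulLeft_apply, dunklT_X_mul_monomial, X_mul_dunklT_monomial, reflOp_monomial,
    dunklCoeff_succ]
  module

lemma mulLeft_X_mul_dunklT_self (μ : Fin n → ℝ) (i : Fin n) :
    LinearMap.mulLeft ℝ (X i) * dunklT μ i =
      LinearMap.mulLeft ℝ (X i) * (pderiv i).toLinearMap + μ i • (1 - reflOp i) := by
  refine MvPolynomial.linearMap_ext_monomial fun m => ?_
  simp only [Module.End.mul_apply, LinearMap.add_apply, LinearMap.smul_apply, LinearMap.sub_apply,
    Module.End.one_apply, LinearMap.mulLeft_apply, Derivation.coeFn_coe, X_mul_dunklT_monomial,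
    X_mul_pderiv_monomial, reflOp_monomial, dunklCoeff]
  module

lemma commute_mulLeft_X (i j : Fin n) :
    Commute (LinearMap.mulLeft ℝ (X i) : Module.End ℝ (MvPolynomial (Fin n) ℝ))
      (LinearMap.mulLeft ℝ (X j)) :=
  (Commute.all (X i) (X j)).map (Algebra.lmul ℝ _)

lemma commute_reflOp (i j : Fin n) : Commute (reflOp (n := n) i) (reflOp j) :=
  MvPolynomial.linearMap_ext_monomial fun m => by simp [reflOp_monomial, smul_smul, mul_comm]

lemma commute_dunklT (μ : Fin n → ℝ) (i j : Fin n) : Commute (dunklT μ i) (dunklT μ j) := by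
  rcases eq_or_ne i j with rfl | h
  · exact Commute.refl _
  refine MvPolynomial.linearMap_ext_monomial fun m => ?_
  simp [dunklT_monomial, smul_smul, h, h.symm, tsub_right_comm, mul_comm]

variable {i j : Fin n}

lemma commute_reflOp_mulLeft_X (h : i ≠ j) :
    Commute (reflOp i) (LinearMap.mulLeft ℝ (X j) : Module.End ℝ (MvPolynomial (Fin n) ℝ)) :=
  MvPolynomial.linearMap_ext_monomial fun m => by
    simp [reflOp_monomial, X, monomial_mul, h]

lemma commute_dunklT_mulLeft_X (μ : Fin n → ℝ) (h : i ≠ j) :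
    Commute (dunklT μ i) (LinearMap.mulLeft ℝ (X j)) :=
  MvPolynomial.linearMap_ext_monomial fun m => by
    simp [dunklT_monomial, X, monomial_mul, h, Finsupp.single_add_tsub_single_of_ne h]

lemma commute_dunklT_reflOp (μ : Fin n → ℝ) (h : i ≠ j) : Commute (dunklT μ i) (reflOp j) :=
  MvPolynomial.linearMap_ext_monomial fun m => by
    simp [dunklT_monomial, reflOp_monomial, smul_smul, h.symm, mul_comm]

lemma isDunklTriple (μ : Fin n → ℝ) (i : Fin n) :
    IsDunklTriple (LinearMap.mulLeft ℝ (X i)) (dunklT μ i) (reflOp i) (μ i) where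
  refl_mul_self := reflOp_mul_self i
  refl_mul_var := reflOp_mul_mulLeft_X_self i
  refl_mul_dunkl := reflOp_mul_dunklT_self μ i
  dunkl_mul_var := dunklT_mul_mulLeft_X_self μ i

lemma eulerOp_add_gamA_smul_one (μ : Fin n → ℝ) (A : Finset (Fin n)) :
    eulerOp A + gamA μ A • 1 = ∑ i ∈ A,
      (LinearMap.mulLeft ℝ (X i) * dunklT μ i + (1 / 2 : ℝ) • 1 + μ i • reflOp i) := by
  simp only [eulerOp, gamA, mulLeft_X_mul_dunklT_self, smul_sub, sum_add_distrib, sum_sub_distrib,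
    add_smul, sum_smul, sum_const]
  module

lemma mulX2_eq_sum (A : Finset (Fin n)) :
    mulX2 A = ∑ i ∈ A, LinearMap.mulLeft ℝ (X i) ^ 2 := by
  show Algebra.lmul ℝ _ _ = _
  simp only [map_sum, map_pow]
  rfl

end Relations

theorem casOp_explicit_general {n : ℕ} (μ : Fin n → ℝ) (i j : Fin n) (hij : i ≠ j) :
    let L : Module.End ℝ (MvPolynomial (Fin n) ℝ) :=
      LinearMap.mulLeft ℝ (X i) * dunklT μ j - LinearMap.mulLeft ℝ (X j) * dunklT μ i
    casOp μ {i} = (1 / 4 : ℝ) •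
        ((μ i ^ 2 - 3 / 4) • (1 : Module.End ℝ (MvPolynomial (Fin n) ℝ)) - μ i • reflOp i) ∧
      casOp μ {i, j} = (1 / 4 : ℝ) •
        (-(L ^ 2) + (μ i • reflOp i + μ j • reflOp j) ^ 2 - 1) := by
  refine ⟨?_, ?_⟩ <;> rw [casOp, eulerOp_add_gamA_smul_one, mulX2_eq_sum, lapD]
  · simp only [sum_singleton]
    rw [(isDunklTriple μ i).casimir_eq]
  · simp only [sum_pair hij]
    rw [(isDunklTriple μ i).casimir_add_eq (isDunklTriple μ j) (commute_mulLeft_X j i)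
      (commute_dunklT_mulLeft_X μ hij) (commute_dunklT_mulLeft_X μ hij.symm) (commute_dunklT μ j i)
      (commute_reflOp_mulLeft_X hij) (commute_dunklT_reflOp μ hij.symm).symm
      (commute_reflOp_mulLeft_X hij.symm) (commute_dunklT_reflOp μ hij).symm (commute_reflOp j i)]

/-- explicit expressions for the one- and two-index Casimir operators,
with `L_{ij} = x_i T_j − x_j T_i` the Dunkl angular momentum operator. -/
theorem casOp_explicit {n : ℕ} (hn : 1 ≤ n) (μ : Fin n → ℝ) (hμ : ∀ i, 0 < μ i)
    (i j : Fin n) (hij : i ≠ j) :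
    let L : Module.End ℝ (MvPolynomial (Fin n) ℝ) :=
      LinearMap.mulLeft ℝ (X i) * dunklT μ j - LinearMap.mulLeft ℝ (X j) * dunklT μ i
    casOp μ {i} = (1 / 4 : ℝ) •
        ((μ i ^ 2 - 3 / 4) • (1 : Module.End ℝ (MvPolynomial (Fin n) ℝ)) - μ i • reflOp i) ∧
      casOp μ {i, j} = (1 / 4 : ℝ) •
        (-(L ^ 2) + (μ i • reflOp i + μ j • reflOp j) ^ 2 - 1) :=
  casOp_explicit_general μ i j hij
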